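/- arXiv:1912.09990 — 2 statements merged into one kernel-verified Lean document; each statement's English description precedes it below -/
import Mathlib

section
/- Let ν be a probability measure on ℝⁿ with finite second moments and let Q ∈ ℝ^{d×d} and R ∈ ℝ^{m×m} be symmetric positive definite. If P₁ and P₂ are symmetric positive definite d×d matrices that both satisfy the Riccati equation P = Q + F(P) − H(P)ᵀ(R + G(P))⁻¹H(P), then P₁ = P₂. -/
open MeasureTheory Matrix Filter
open scoped Kronecker

noncomputable section

/-- `A(w) = A₀ + Σᵢ w⁽ⁱ⁾ Aᵢ`. -/
def Amat {n d : ℕ} (A : Fin (n + 1) → Matrix (Fin d) (Fin d) ℝ) (w : Fin n → ℝ) :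
    Matrix (Fin d) (Fin d) ℝ :=
  A 0 + ∑ i : Fin n, w i • A i.succ

/-- `B(w) = B₀ + Σᵢ w⁽ⁱ⁾ Bᵢ`. -/
def Bmat {n d m : ℕ} (B : Fin (n + 1) → Matrix (Fin d) (Fin m) ℝ) (w : Fin n → ℝ) :
    Matrix (Fin d) (Fin m) ℝ :=
  B 0 + ∑ i : Fin n, w i • B i.succ

/-- `Ā₀`: the `((n+1)d) × d` vertical stacking of `A₀, A₁, …, Aₙ`. -/
def Abar {n d : ℕ} (A : Fin (n + 1) → Matrix (Fin d) (Fin d) ℝ) :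
    Matrix (Fin (n + 1) × Fin d) (Fin d) ℝ :=
  Matrix.of fun p j => A p.1 p.2 j

/-- `B̄₀`: the `((n+1)d) × m` vertical stacking of `B₀, B₁, …, Bₙ`. -/
def Bbar {n d m : ℕ} (B : Fin (n + 1) → Matrix (Fin d) (Fin m) ℝ) :
    Matrix (Fin (n + 1) × Fin d) (Fin m) ℝ :=
  Matrix.of fun p j => B p.1 p.2 j

/-- `Σ̃ = [[1, μᵀ], [μ, Σ + μμᵀ]]`. -/
def tildeSigma {n : ℕ} (μ : Fin n → ℝ) (S : Matrix (Fin n) (Fin n) ℝ) :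
    Matrix (Fin (n + 1)) (Fin (n + 1)) ℝ :=
  Matrix.of fun i j =>
    Fin.cases (motive := fun _ => ℝ)
      (Fin.cases (motive := fun _ => ℝ) (1 : ℝ) (fun j' => μ j') j)
      (fun i' => Fin.cases (motive := fun _ => ℝ) (μ i')
        (fun j' => S i' j' + μ i' * μ j') j) i

/-- `F(P) = Ā₀ᵀ(Σ̃ ⊗ P)Ā₀`. -/
def Fm {n d : ℕ} (A : Fin (n + 1) → Matrix (Fin d) (Fin d) ℝ)
    (St : Matrix (Fin (n + 1)) (Fin (n + 1)) ℝ) (P : Matrix (Fin d) (Fin d) ℝ) :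
    Matrix (Fin d) (Fin d) ℝ :=
  (Abar A)ᵀ * (St ⊗ₖ P) * Abar A

/-- `G(P) = B̄₀ᵀ(Σ̃ ⊗ P)B̄₀`. -/
def Gm {n d m : ℕ} (B : Fin (n + 1) → Matrix (Fin d) (Fin m) ℝ)
    (St : Matrix (Fin (n + 1)) (Fin (n + 1)) ℝ) (P : Matrix (Fin d) (Fin d) ℝ) :
    Matrix (Fin m) (Fin m) ℝ :=
  (Bbar B)ᵀ * (St ⊗ₖ P) * Bbar B

/-- `H(P) = B̄₀ᵀ(Σ̃ ⊗ P)Ā₀`. -/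
def Hm {n d m : ℕ} (A : Fin (n + 1) → Matrix (Fin d) (Fin d) ℝ)
    (B : Fin (n + 1) → Matrix (Fin d) (Fin m) ℝ)
    (St : Matrix (Fin (n + 1)) (Fin (n + 1)) ℝ) (P : Matrix (Fin d) (Fin d) ℝ) :
    Matrix (Fin m) (Fin d) ℝ :=
  (Bbar B)ᵀ * (St ⊗ₖ P) * Abar A

/-!
`Σ̃` is the second-moment matrix of `(1, w)` under `ν`, hence positive semidefinite, so for every
gain `K` the closed-loop map `T_K X = (Ā₀ + B̄₀K)ᵀ(Σ̃ ⊗ X)(Ā₀ + B̄₀K)` is a positive linear map.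
Completing the square shows that a solution `P` of the Riccati equation satisfies
`P ≤ Q + KᵀRK + T_K P` for every `K`, with equality at its own optimal gain. Taking the optimal
gain `K` of `P₂` in both equations gives `Δ = P₁ - P₂ ≤ T_K Δ`, while
`T_K P₂ ≤ P₂ - Q ≤ r P₂` for some `r < 1` because `Q > 0`. Iterating from `Δ ≤ c P₂` yields
`Δ ≤ c rᴺ P₂ → 0`, so `P₁ ≤ P₂`, and by symmetry `P₁ = P₂`.
-/

open scoped MatrixOrder

section OrderedModule
variable {E : Type*} [AddCommGroup E] [PartialOrder E] [Module ℝ E]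
  [PosSMulMono ℝ E] [TopologicalSpace E] [OrderClosedTopology E] [ContinuousSMul ℝ E]

theorem LinearMap.nonpos_of_le_apply_of_apply_le_smul (T : E →ₗ[ℝ] E) (hT : Monotone T)
    {p x : E} {r c : ℝ} (hr₀ : 0 ≤ r) (hr₁ : r < 1) (hc : 0 ≤ c)
    (hp : T p ≤ r • p) (hx : x ≤ T x) (hxp : x ≤ c • p) : x ≤ 0 := by
  have hN : ∀ N : ℕ, x ≤ (c * r ^ N) • p := by
    intro N
    induction N with
    | zero => simpa using hxp
    | succ N ih =>
      calc x ≤ T x := hx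
        _ ≤ T ((c * r ^ N) • p) := hT ih
        _ = (c * r ^ N) • T p := map_smul T _ p
        _ ≤ (c * r ^ N) • r • p := smul_le_smul_of_nonneg_left hp (by positivity)
        _ = (c * r ^ (N + 1)) • p := by rw [smul_smul, pow_succ, mul_assoc]
  have hlim : Filter.Tendsto (fun N : ℕ => (c * r ^ N) • p) Filter.atTop (nhds 0) := by
    simpa using ((tendsto_pow_atTop_nhds_zero_of_lt_one hr₀ hr₁).const_mul c).smul_const p
  exact ge_of_tendsto' hlim hN

end OrderedModule

theorem IsSelfAdjoint.exists_le_smul_of_isStrictlyPositive {A : Type*} [TopologicalSpace A]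
    [Ring A] [StarRing A] [PartialOrder A] [StarOrderedRing A] [Algebra ℝ A]
    [NonnegSpectrumClass ℝ A] [ContinuousFunctionalCalculus ℝ A IsSelfAdjoint]
    [PosSMulMono ℝ A] {a b : A} (ha : IsSelfAdjoint a) (hb : IsStrictlyPositive b) :
    ∃ c ≥ (0 : ℝ), a ≤ c • b := by
  rcases subsingleton_or_nontrivial A with hA | hA
  · exact ⟨0, le_rfl, (Subsingleton.elim a _).le⟩
  obtain ⟨r, hr, hrb⟩ := (CFC.exists_pos_algebraMap_le_iff hb.isSelfAdjoint).2
    fun x hx => hb.spectrum_pos hx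
  obtain ⟨s, hs⟩ :=
    (ContinuousFunctionalCalculus.isCompact_spectrum (R := ℝ) (p := IsSelfAdjoint) a).bddAbove
  have has : a ≤ algebraMap ℝ A (max s 0) :=
    le_algebraMap_of_spectrum_le (fun x hx => (hs hx).trans (le_max_left _ _)) ha
  refine ⟨max s 0 / r, by positivity, has.trans ?_⟩
  calc algebraMap ℝ A (max s 0) = (max s 0 / r) • algebraMap ℝ A r := by
        rw [Algebra.smul_def, ← map_mul, div_mul_cancel₀ _ hr.ne']
    _ ≤ (max s 0 / r) • b := smul_le_smul_of_nonneg_left hrb (by positivity)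

namespace Matrix
variable {n : Type*} [Fintype n]

theorem isClosed_setOf_posSemidef : IsClosed {A : Matrix n n ℝ | A.PosSemidef} := by
  simp only [posSemidef_iff_dotProduct_mulVec, Set.ofPred_and, Set.ofPred_forall]
  refine IsClosed.inter (isClosed_eq continuous_id.matrix_conjTranspose continuous_id) ?_
  exact isClosed_iInter fun x => isClosed_le continuous_const
    (continuous_const.dotProduct (continuous_id.matrix_mulVec continuous_const))

instance instOrderClosedTopology : OrderClosedTopology (Matrix n n ℝ) where
  isClosed_le' := isClosed_setOf_posSemidef.preimage (continuous_snd.sub continuous_fst)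

end Matrix

section SecondMoment
variable {Ω ι : Type*} [MeasurableSpace Ω] [Fintype ι]

theorem Matrix.posSemidef_of_integral_mul (ν : Measure Ω) (f : Ω → ι → ℝ)
    (hf : ∀ i j, Integrable (fun ω => f ω i * f ω j) ν) :
    (Matrix.of fun i j => ∫ ω, f ω i * f ω j ∂ν).PosSemidef := by
  refine .of_dotProduct_mulVec_nonneg ?_ fun x => ?_
  · ext i j
    simp only [conjTranspose_apply, of_apply, star_trivial, mul_comm]
  · have hsq : ∀ ω, (x ⬝ᵥ f ω) ^ 2 = ∑ i, ∑ j, x i * x j * (f ω i * f ω j) := fun ω => by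
      simp only [dotProduct, sq, Finset.sum_mul_sum]
      exact Finset.sum_congr rfl fun i _ => Finset.sum_congr rfl fun j _ => by ring
    calc (0 : ℝ) ≤ ∫ ω, (x ⬝ᵥ f ω) ^ 2 ∂ν := integral_nonneg fun ω => sq_nonneg _
      _ = star x ⬝ᵥ (of fun i j => ∫ ω, f ω i * f ω j ∂ν) *ᵥ x := by
        simp only [hsq, star_trivial]
        simp only [dotProduct, mulVec, of_apply, Finset.mul_sum]
        rw [integral_finsetSum _ fun i _ => integrable_finsetSum _ fun j _ =>
          (hf i j).const_mul _]
        refine Finset.sum_congr rfl fun i _ => ?_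
        rw [integral_finsetSum _ fun j _ => (hf i j).const_mul _]
        refine Finset.sum_congr rfl fun j _ => ?_
        rw [integral_const_mul]; ring

end SecondMoment

section tildeSigma
variable {n : ℕ} {ν : Measure (Fin n → ℝ)} [IsProbabilityMeasure ν]

theorem integral_mul_eq_covariance_add
    (hint1 : ∀ i, Integrable (fun w : Fin n → ℝ => w i) ν)
    (hint2 : ∀ i j, Integrable (fun w : Fin n → ℝ => w i * w j) ν)
    {μ : Fin n → ℝ} (hμ : ∀ i, μ i = ∫ w, w i ∂ν)
    {Sg : Matrix (Fin n) (Fin n) ℝ}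
    (hSg : ∀ i j, Sg i j = ∫ w, (w i - μ i) * (w j - μ j) ∂ν) (i j : Fin n) :
    ∫ w, w i * w j ∂ν = Sg i j + μ i * μ j := by
  have hL2 : ∀ i, MemLp (fun w : Fin n → ℝ => w i) 2 ν := fun i =>
    (memLp_two_iff_integrable_sq (hint1 i).aestronglyMeasurable).2
      (by simpa [sq] using hint2 i i)
  have := ProbabilityTheory.covariance_eq_sub (hL2 i) (hL2 j)
  rw [ProbabilityTheory.covariance, ← hμ, ← hμ, ← hSg] at this
  rw [this, sub_add_cancel]
  rfl

theorem tildeSigma_eq_integral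
    (hint1 : ∀ i, Integrable (fun w : Fin n → ℝ => w i) ν)
    (hint2 : ∀ i j, Integrable (fun w : Fin n → ℝ => w i * w j) ν)
    {μ : Fin n → ℝ} (hμ : ∀ i, μ i = ∫ w, w i ∂ν)
    {Sg : Matrix (Fin n) (Fin n) ℝ}
    (hSg : ∀ i j, Sg i j = ∫ w, (w i - μ i) * (w j - μ j) ∂ν) :
    tildeSigma μ Sg = Matrix.of fun i j =>
      ∫ w, (Fin.cons 1 w : Fin (n + 1) → ℝ) i * (Fin.cons 1 w : Fin (n + 1) → ℝ) j ∂ν := by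
  ext i j
  induction i using Fin.cases <;> induction j using Fin.cases <;>
    simp [tildeSigma, hμ, integral_mul_eq_covariance_add hint1 hint2 hμ hSg]

theorem tildeSigma_posSemidef
    (hint1 : ∀ i, Integrable (fun w : Fin n → ℝ => w i) ν)
    (hint2 : ∀ i j, Integrable (fun w : Fin n → ℝ => w i * w j) ν)
    {μ : Fin n → ℝ} (hμ : ∀ i, μ i = ∫ w, w i ∂ν)
    {Sg : Matrix (Fin n) (Fin n) ℝ}
    (hSg : ∀ i j, Sg i j = ∫ w, (w i - μ i) * (w j - μ j) ∂ν) :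
    (tildeSigma μ Sg).PosSemidef := by
  rw [tildeSigma_eq_integral hint1 hint2 hμ hSg]
  refine Matrix.posSemidef_of_integral_mul ν _ fun i j => ?_
  induction i using Fin.cases <;> induction j using Fin.cases <;> simp [hint1, hint2]

end tildeSigma

section CompletingSquare
variable {ι α β : Type*} [Fintype ι] [Fintype β] [DecidableEq β]

theorem Matrix.completing_square {M : Matrix ι ι ℝ} (hM : Mᵀ = M) {R : Matrix β β ℝ}
    (hR : Rᵀ = R) (A : Matrix ι α ℝ) (B : Matrix ι β ℝ) (K : Matrix β α ℝ)
    (hW : IsUnit (R + Bᵀ * M * B).det) :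
    Kᵀ * R * K + (A + B * K)ᵀ * M * (A + B * K) =
      Aᵀ * M * A - (Bᵀ * M * A)ᵀ * (R + Bᵀ * M * B)⁻¹ * (Bᵀ * M * A) +
        (K + (R + Bᵀ * M * B)⁻¹ * (Bᵀ * M * A))ᵀ * (R + Bᵀ * M * B) *
          (K + (R + Bᵀ * M * B)⁻¹ * (Bᵀ * M * A)) := by
  set W := R + Bᵀ * M * B with hW_def
  have hWt : (W⁻¹)ᵀ = W⁻¹ := by
    rw [transpose_nonsing_inv, hW_def, transpose_add, hR, transpose_mul, transpose_mul,
      transpose_transpose, hM, Matrix.mul_assoc]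
  set H := Bᵀ * M * A with hH_def
  simp only [transpose_add, transpose_mul, hWt]
  simp only [Matrix.add_mul, Matrix.mul_add, Matrix.mul_assoc,
    mul_nonsing_inv_cancel_left _ _ hW, nonsing_inv_mul_cancel_left _ _ hW]
  simp only [hW_def, hH_def, transpose_mul, transpose_transpose, hM, Matrix.add_mul,
    Matrix.mul_add, Matrix.mul_assoc]
  abel

end CompletingSquare

theorem Matrix.PosSemidef.transpose_mul_mul_same {ι κ 𝕜 : Type*} [Fintype ι] [Finite κ]
    [CommRing 𝕜] [PartialOrder 𝕜] [StarRing 𝕜] [TrivialStar 𝕜] {M : Matrix ι ι 𝕜}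
    (hM : M.PosSemidef) (L : Matrix ι κ 𝕜) : (Lᵀ * M * L).PosSemidef := by
  simpa only [conjTranspose_eq_transpose_of_trivial] using hM.conjTranspose_mul_mul_same L

section ClosedLoop
variable {ι κ ρ : Type*} [Fintype ι] [Fintype κ]

def Matrix.closedLoopMap (S : Matrix ι ι ℝ) (L : Matrix (ι × κ) ρ ℝ) :
    Matrix κ κ ℝ →ₗ[ℝ] Matrix ρ ρ ℝ where
  toFun X := Lᵀ * (S ⊗ₖ X) * L
  map_add' X Y := by rw [kronecker_add, Matrix.mul_add, Matrix.add_mul]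
  map_smul' c X := by rw [kronecker_smul, Matrix.mul_smul, Matrix.smul_mul, RingHom.id_apply]

theorem Matrix.closedLoopMap_apply (S : Matrix ι ι ℝ) (L : Matrix (ι × κ) ρ ℝ)
    (X : Matrix κ κ ℝ) : closedLoopMap S L X = Lᵀ * (S ⊗ₖ X) * L := rfl

theorem Matrix.PosSemidef.closedLoopMap_monotone [Finite ρ] {S : Matrix ι ι ℝ}
    (hS : S.PosSemidef) (L : Matrix (ι × κ) ρ ℝ) : Monotone (closedLoopMap S L) := fun X Y hXY => by
  rw [le_iff, ← map_sub, closedLoopMap_apply]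
  exact (hS.kronecker hXY).transpose_mul_mul_same L

end ClosedLoop

section Riccati
variable {n d m : ℕ} (A : Fin (n + 1) → Matrix (Fin d) (Fin d) ℝ)
  (B : Fin (n + 1) → Matrix (Fin d) (Fin m) ℝ) (St : Matrix (Fin (n + 1)) (Fin (n + 1)) ℝ)
  (Q : Matrix (Fin d) (Fin d) ℝ) (R : Matrix (Fin m) (Fin m) ℝ)

def riccati (P : Matrix (Fin d) (Fin d) ℝ) : Matrix (Fin d) (Fin d) ℝ :=
  Q + Fm A St P - (Hm A B St P)ᵀ * (R + Gm B St P)⁻¹ * Hm A B St P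

def riccatiGain (P : Matrix (Fin d) (Fin d) ℝ) : Matrix (Fin m) (Fin d) ℝ :=
  -((R + Gm B St P)⁻¹ * Hm A B St P)

variable {A B St Q R}

theorem posDef_add_Gm (hSt : St.PosSemidef) (hR : R.PosDef) {P : Matrix (Fin d) (Fin d) ℝ}
    (hP : P.PosSemidef) : (R + Gm B St P).PosDef :=
  hR.add_posSemidef ((hSt.kronecker hP).transpose_mul_mul_same (Bbar B))

theorem add_closedLoopMap_eq_riccati_add (hSt : St.PosSemidef) (hR : R.PosDef)
    {P : Matrix (Fin d) (Fin d) ℝ} (hP : P.PosSemidef) (K : Matrix (Fin m) (Fin d) ℝ) :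
    Q + Kᵀ * R * K + closedLoopMap St (Abar A + Bbar B * K) P =
      riccati A B St Q R P + (K - riccatiGain A B St R P)ᵀ * (R + Gm B St P) *
        (K - riccatiGain A B St R P) := by
  have hW := posDef_add_Gm (B := B) hSt hR hP
  have hM : (St ⊗ₖ P)ᵀ = St ⊗ₖ P := by
    rw [← kroneckerMap_transpose, ← conjTranspose_eq_transpose_of_trivial,
      ← conjTranspose_eq_transpose_of_trivial, hSt.1, hP.1]
  have hRt : Rᵀ = R := by rw [← conjTranspose_eq_transpose_of_trivial, hR.1]
  rw [add_assoc, closedLoopMap_apply,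
    completing_square hM hRt _ _ K (isUnit_iff_ne_zero.mpr hW.det_pos.ne')]
  simp only [riccati, riccatiGain, Fm, Gm, Hm, sub_neg_eq_add]
  abel

theorem riccati_le_closedLoop (hSt : St.PosSemidef) (hR : R.PosDef)
    {P : Matrix (Fin d) (Fin d) ℝ} (hP : P.PosSemidef) (K : Matrix (Fin m) (Fin d) ℝ) :
    riccati A B St Q R P ≤ Q + Kᵀ * R * K + closedLoopMap St (Abar A + Bbar B * K) P := by
  rw [add_closedLoopMap_eq_riccati_add hSt hR hP K]
  refine le_add_of_nonneg_right ?_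
  exact ((posDef_add_Gm hSt hR hP).posSemidef.transpose_mul_mul_same _).nonneg

theorem riccati_eq_closedLoop_riccatiGain (hSt : St.PosSemidef) (hR : R.PosDef)
    {P : Matrix (Fin d) (Fin d) ℝ} (hP : P.PosSemidef) :
    riccati A B St Q R P = Q + (riccatiGain A B St R P)ᵀ * R * riccatiGain A B St R P +
      closedLoopMap St (Abar A + Bbar B * riccatiGain A B St R P) P := by
  simp [add_closedLoopMap_eq_riccati_add hSt hR hP]

theorem le_of_riccati_fixedPoint (hSt : St.PosSemidef) (hQ : Q.PosDef) (hR : R.PosDef)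
    {P₁ P₂ : Matrix (Fin d) (Fin d) ℝ} (hP₁ : P₁.PosSemidef) (hP₂ : P₂.PosDef)
    (hRic₁ : P₁ = riccati A B St Q R P₁) (hRic₂ : P₂ = riccati A B St Q R P₂) : P₁ ≤ P₂ := by
  set K := riccatiGain A B St R P₂
  set T := closedLoopMap St (Abar A + Bbar B * K)
  have hKRK : 0 ≤ Kᵀ * R * K := (hR.posSemidef.transpose_mul_mul_same K).nonneg
  have hTP₂ : T P₂ = P₂ - (Q + Kᵀ * R * K) :=
    eq_sub_of_add_eq'
      (hRic₂.trans (riccati_eq_closedLoop_riccatiGain hSt hR hP₂.posSemidef)).symm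
  have hΔ : P₁ - P₂ ≤ T (P₁ - P₂) :=
    calc P₁ - P₂ ≤ Q + Kᵀ * R * K + T P₁ - P₂ :=
          sub_le_sub_right (hRic₁.trans_le (riccati_le_closedLoop hSt hR hP₁ K)) _
      _ = T (P₁ - P₂) := by rw [map_sub, hTP₂]; abel
  obtain ⟨c₀, hc₀, hP₂Q⟩ := (isHermitian_iff_isSelfAdjoint.mp hP₂.1)
    |>.exists_le_smul_of_isStrictlyPositive hQ.isStrictlyPositive
  have hQP₂ : (c₀ + 1)⁻¹ • P₂ ≤ Q :=
    calc (c₀ + 1)⁻¹ • P₂ ≤ (c₀ + 1)⁻¹ • (c₀ + 1) • Q := by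
          refine smul_le_smul_of_nonneg_left (hP₂Q.trans ?_) (by positivity)
          rw [add_smul, one_smul]
          exact le_add_of_nonneg_right hQ.posSemidef.nonneg
      _ = Q := by rw [smul_smul, inv_mul_cancel₀ (by positivity), one_smul]
  have hTcontr : T P₂ ≤ (1 - (c₀ + 1)⁻¹) • P₂ :=
    calc T P₂ = P₂ - (Q + Kᵀ * R * K) := hTP₂
      _ ≤ P₂ - (c₀ + 1)⁻¹ • P₂ := sub_le_sub_left (le_add_of_le_of_nonneg hQP₂ hKRK) _
      _ = (1 - (c₀ + 1)⁻¹) • P₂ := by rw [sub_smul, one_smul]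
  obtain ⟨c, hc, hΔP₂⟩ := (isHermitian_iff_isSelfAdjoint.mp (hP₁.1.sub hP₂.1))
    |>.exists_le_smul_of_isStrictlyPositive hP₂.isStrictlyPositive
  exact sub_nonpos.mp <| T.nonpos_of_le_apply_of_apply_le_smul
    (hSt.closedLoopMap_monotone _) (sub_nonneg.2 (inv_le_one_of_one_le₀ (by linarith)))
    (sub_lt_self _ (by positivity)) hc hTcontr hΔ hΔP₂

end Riccati

/-- Symmetric positive definite solutions of the Riccati equation
`P = Q + F(P) − H(P)ᵀ(R + G(P))⁻¹H(P)` are unique. -/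
theorem stmt12 {n d m : ℕ}
    (A : Fin (n + 1) → Matrix (Fin d) (Fin d) ℝ)
    (B : Fin (n + 1) → Matrix (Fin d) (Fin m) ℝ)
    (ν : Measure (Fin n → ℝ)) [IsProbabilityMeasure ν]
    (hint1 : ∀ i, Integrable (fun w : Fin n → ℝ => w i) ν)
    (hint2 : ∀ i j, Integrable (fun w : Fin n → ℝ => w i * w j) ν)
    (μ : Fin n → ℝ) (hμ : ∀ i, μ i = ∫ w, w i ∂ν)
    (Sg : Matrix (Fin n) (Fin n) ℝ)
    (hSg : ∀ i j, Sg i j = ∫ w, (w i - μ i) * (w j - μ j) ∂ν)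
    (Q : Matrix (Fin d) (Fin d) ℝ) (hQ : Q.PosDef)
    (R : Matrix (Fin m) (Fin m) ℝ) (hR : R.PosDef)
    (P₁ P₂ : Matrix (Fin d) (Fin d) ℝ) (hP₁ : P₁.PosDef) (hP₂ : P₂.PosDef)
    (hRic₁ : P₁ = Q + Fm A (tildeSigma μ Sg) P₁ -
      (Hm A B (tildeSigma μ Sg) P₁)ᵀ * (R + Gm B (tildeSigma μ Sg) P₁)⁻¹ *
        Hm A B (tildeSigma μ Sg) P₁)
    (hRic₂ : P₂ = Q + Fm A (tildeSigma μ Sg) P₂ -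
      (Hm A B (tildeSigma μ Sg) P₂)ᵀ * (R + Gm B (tildeSigma μ Sg) P₂)⁻¹ *
        Hm A B (tildeSigma μ Sg) P₂) :
    P₁ = P₂ := by
  have hSt := tildeSigma_posSemidef hint1 hint2 hμ hSg
  exact le_antisymm (le_of_riccati_fixedPoint hSt hQ hR hP₁.posSemidef hP₂ hRic₁ hRic₂)
    (le_of_riccati_fixedPoint hSt hQ hR hP₂.posSemidef hP₁ hRic₂ hRic₁)

end
end

section
/- Let ν be a probability measure on ℝⁿ with finite second moments, let Q ∈ ℝ^{d×d} and R ∈ ℝ^{m×m} be symmetric positive definite, let P ∈ ℝ^{d×d} be symmetric positive definite satisfying the Riccati equation P = Q + F(P) − H(P)ᵀ(R + G(P))⁻¹H(P), and set K = −(R + G(P))⁻¹H(P). Then for every x₀ ∈ ℝ^d, the infinite-horizon closed-loop cost under the linear feedback u = Kx is finite and equals x₀ᵀ P x₀; that is, Σ_{k=0}^∞ tr((Q + KᵀRK) S_k(x₀)) = x₀ᵀ P x₀, where S_k(x₀) are the closed-loop second-moment matrices. -/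
/-!
Along the closed loop `x ↦ M(w) x` with `M(w) = A(w) + B(w) K`, the value `V(x) = xᵀ P x` is a
Lyapunov function whose decrease is exactly the stage cost. Since `M(w)` is affine in `w`, i.e.
linear in `(1, w)` whose second-moment matrix is `Σ̃`, one has `E[M(w)ᵀ P M(w)] = F(P) + KᵀH(P) +
H(P)ᵀK + KᵀG(P)K`, and completing the square in the Riccati equation turns this into
`P - (Q + KᵀRK)`. Hence `t_k = tr(P S_k)` satisfies `t_k - t_{k+1} = tr((Q + KᵀRK) S_k)`, and the
cost series telescopes to `t_0 = x₀ᵀ P x₀` once `t_k → 0`. That holds because `Q + KᵀRK ≥ c P`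
for some `c > 0`, so `t_{k+1} ≤ (1 - c) t_k`.
-/

open MeasureTheory Matrix Filter
open scoped Kronecker

noncomputable section

/-- Second-moment matrices of the autonomous system `x_{k+1} = M(w_k) x_k`. -/
def Sseq {n d : ℕ} (ν : Measure (Fin n → ℝ))
    (M : (Fin n → ℝ) → Matrix (Fin d) (Fin d) ℝ) (x₀ : Fin d → ℝ) :
    ℕ → Matrix (Fin d) (Fin d) ℝ
  | 0 => Matrix.vecMulVec x₀ x₀
  | k + 1 => Matrix.of fun i j => ∫ w, (M w * Sseq ν M x₀ k * (M w)ᵀ) i j ∂ν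

namespace Matrix

section Order

variable {ι κ : Type*} [Fintype ι] [Fintype κ]

lemma PosSemidef.transpose_mul_mul_same_s13 {A : Matrix ι ι ℝ} (hA : A.PosSemidef)
    (B : Matrix ι κ ℝ) : (Bᵀ * A * B).PosSemidef := by
  simpa [conjTranspose_eq_transpose_of_trivial] using hA.conjTranspose_mul_mul_same B

lemma PosSemidef.mul_mul_transpose_same {A : Matrix ι ι ℝ} (hA : A.PosSemidef)
    (B : Matrix κ ι ℝ) : (B * A * Bᵀ).PosSemidef := by
  simpa [conjTranspose_eq_transpose_of_trivial] using hA.mul_mul_conjTranspose_same B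

lemma PosSemidef.trace_mul_nonneg {A B : Matrix ι ι ℝ} (hA : A.PosSemidef) (hB : B.PosSemidef) :
    0 ≤ (A * B).trace := by
  classical
  open scoped MatrixOrder in
  obtain ⟨X, rfl⟩ := CStarAlgebra.nonneg_iff_eq_star_mul_self.mp hA.nonneg
  rw [star_eq_conjTranspose, Matrix.mul_assoc, trace_mul_comm]
  exact (hB.mul_mul_conjTranspose_same X).trace_nonneg

open scoped MatrixOrder in
lemma PosDef.exists_pos_sub_smul_posSemidef [DecidableEq ι] {Q P : Matrix ι ι ℝ}
    (hQ : Q.PosDef) (hP : P.IsHermitian) : ∃ c : ℝ, 0 < c ∧ (Q - c • P).PosSemidef := by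
  cases isEmpty_or_nonempty ι
  · exact ⟨1, one_pos, by rw [Subsingleton.elim (Q - _) 0]; exact .zero⟩
  obtain ⟨s, hs, hsQ⟩ := (CFC.exists_pos_algebraMap_le_iff hQ.isHermitian).2
    fun x hx => hQ.isStrictlyPositive.spectrum_pos hx
  obtain ⟨r, hr⟩ := P.finite_real_spectrum.bddAbove
  have hr1 : 0 < max r 1 := lt_max_of_lt_right one_pos
  have hPr : P ≤ algebraMap ℝ _ (max r 1) :=
    le_algebraMap_of_spectrum_le fun x hx => (hr hx).trans (le_max_left r 1)
  refine ⟨s / max r 1, div_pos hs hr1, ?_⟩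
  have hsplit : Q - (s / max r 1) • P =
      (Q - algebraMap ℝ _ s) + (s / max r 1) • (algebraMap ℝ _ (max r 1) - P) := by
    simp only [Algebra.algebraMap_eq_smul_one, smul_sub, smul_smul, div_mul_cancel₀ _ hr1.ne']
    abel
  rw [hsplit]
  exact PosSemidef.add hsQ (PosSemidef.smul hPr (div_pos hs hr1).le)

end Order

lemma sum_smul_mul_mul_sum_smul {ι l m n o : Type*} [Fintype ι] [Fintype m] [Fintype n]
    (a b : ι → ℝ) (U : ι → Matrix l m ℝ) (X : Matrix m n ℝ) (V : ι → Matrix n o ℝ) :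
    (∑ p, a p • U p) * X * (∑ q, b q • V q) = ∑ p, ∑ q, (a p * b q) • (U p * X * V q) := by
  simp only [Matrix.sum_mul, Matrix.mul_sum, Matrix.smul_mul, Matrix.mul_smul, Finset.smul_sum,
    smul_smul]
  rw [Finset.sum_comm]
  simp only [mul_comm (b _)]

section EntrywiseIntegral

variable {α ι l m n o : Type*} [MeasurableSpace α] {ν : Measure α}

/-- Matrices carry no global norm, so expectations of random matrices are taken entrywise,
as in `Sseq`. -/
def entrywiseIntegral (ν : Measure α) (f : α → Matrix m n ℝ) : Matrix m n ℝ :=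
  of fun i j => ∫ w, f w i j ∂ν

lemma trace_mul_entrywiseIntegral [Fintype n] {f : α → Matrix n n ℝ}
    (hf : ∀ i j, Integrable (fun w => f w i j) ν) (P : Matrix n n ℝ) :
    (P * entrywiseIntegral ν f).trace = ∫ w, (P * f w).trace ∂ν := by
  simp only [entrywiseIntegral, trace, diag, mul_apply, of_apply, ← integral_const_mul]
  calc _ = ∑ i, ∫ w, ∑ j, P i j * f w j i ∂ν := Finset.sum_congr rfl fun i _ =>
        (integral_finsetSum _ fun j _ => (hf j i).const_mul _).symm
    _ = _ := (integral_finsetSum _ fun i _ =>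
        integrable_finsetSum _ fun j _ => (hf j i).const_mul _).symm

lemma dotProduct_mulVec_entrywiseIntegral [Fintype n] {f : α → Matrix n n ℝ}
    (hf : ∀ i j, Integrable (fun w => f w i j) ν) (v : n → ℝ) :
    v ⬝ᵥ entrywiseIntegral ν f *ᵥ v = ∫ w, v ⬝ᵥ f w *ᵥ v ∂ν := by
  have hint : ∀ i j, Integrable (fun w => v i * (f w i j * v j)) ν :=
    fun i j => ((hf i j).mul_const _).const_mul _
  simp only [entrywiseIntegral, dotProduct, mulVec, of_apply, Finset.mul_sum,
    ← integral_mul_const, ← integral_const_mul]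
  calc _ = ∑ i, ∫ w, ∑ j, v i * (f w i j * v j) ∂ν := Finset.sum_congr rfl fun i _ =>
        (integral_finsetSum _ fun j _ => hint i j).symm
    _ = _ := (integral_finsetSum _ fun i _ => integrable_finsetSum _ fun j _ => hint i j).symm

lemma posSemidef_entrywiseIntegral [Fintype n] {f : α → Matrix n n ℝ}
    (hf : ∀ i j, Integrable (fun w => f w i j) ν) (hpsd : ∀ w, (f w).PosSemidef) :
    (entrywiseIntegral ν f).PosSemidef := by
  refine PosSemidef.of_dotProduct_mulVec_nonneg ?_ fun v => ?_
  · refine isHermitian_iff_isSymm.2 (IsSymm.ext fun i j => ?_)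
    simp only [entrywiseIntegral, of_apply]
    congr 1; ext w
    exact (isHermitian_iff_isSymm.1 (hpsd w).isHermitian).apply i j
  · rw [star_trivial, dotProduct_mulVec_entrywiseIntegral hf]
    exact integral_nonneg fun w => by simpa using (hpsd w).dotProduct_mulVec_nonneg v

variable [Fintype ι] [Fintype m] [Fintype n] {c : α → ι → ℝ}

lemma integrable_sum_smul_mul_mul_sum_smul_apply
    (hc : ∀ p q, Integrable (fun w => c w p * c w q) ν) (U : ι → Matrix l m ℝ)
    (X : Matrix m n ℝ) (V : ι → Matrix n o ℝ) (i : l) (j : o) :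
    Integrable (fun w => ((∑ p, c w p • U p) * X * (∑ q, c w q • V q)) i j) ν := by
  simp only [sum_smul_mul_mul_sum_smul, Matrix.sum_apply, Matrix.smul_apply, smul_eq_mul]
  exact integrable_finsetSum _ fun p _ => integrable_finsetSum _ fun q _ =>
    (hc p q).mul_const _

lemma entrywiseIntegral_sum_smul_mul_mul_sum_smul
    (hc : ∀ p q, Integrable (fun w => c w p * c w q) ν) (U : ι → Matrix l m ℝ)
    (X : Matrix m n ℝ) (V : ι → Matrix n o ℝ) :
    entrywiseIntegral ν (fun w => (∑ p, c w p • U p) * X * (∑ q, c w q • V q)) =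
      ∑ p, ∑ q, (∫ w, c w p * c w q ∂ν) • (U p * X * V q) := by
  ext i j
  simp only [entrywiseIntegral, of_apply, sum_smul_mul_mul_sum_smul, Matrix.sum_apply,
    Matrix.smul_apply, smul_eq_mul]
  rw [integral_finsetSum _ fun p _ => integrable_finsetSum _ fun q _ => (hc p q).mul_const _]
  refine Finset.sum_congr rfl fun p _ => ?_
  rw [integral_finsetSum _ fun q _ => (hc p q).mul_const _]
  exact Finset.sum_congr rfl fun q _ => integral_mul_const _ _

end EntrywiseIntegral

end Matrix

open Topology in
lemma hasSum_sub_succ_of_le_sub_succ {t : ℕ → ℝ} {c : ℝ} (hc : 0 < c) (ht : ∀ k, 0 ≤ t k)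
    (hdec : ∀ k, c * t k ≤ t k - t (k + 1)) : HasSum (fun k => t k - t (k + 1)) (t 0) := by
  have hterm : ∀ k, 0 ≤ t k - t (k + 1) := fun k => (mul_nonneg hc.le (ht k)).trans (hdec k)
  obtain ⟨L, hL⟩ : ∃ L, Tendsto t atTop (𝓝 L) :=
    ⟨_, tendsto_atTop_ciInf (antitone_nat_of_succ_le fun k => sub_nonneg.1 (hterm k))
      ⟨0, Set.forall_mem_range.2 ht⟩⟩
  have hL0 : L = 0 := by
    have hcL : c * L ≤ L - L := le_of_tendsto_of_tendsto' (hL.const_mul c)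
      (hL.sub (hL.comp (tendsto_add_atTop_nat 1))) hdec
    have hL_nonneg : 0 ≤ L := ge_of_tendsto' hL ht
    nlinarith
  rw [hasSum_iff_tendsto_nat_of_nonneg hterm]
  simp_rw [Finset.sum_range_sub']
  simpa [hL0] using (tendsto_const_nhds (x := t 0)).sub hL

lemma hasSum_trace_mul_of_trace_mul_succ {ι : Type*} [Fintype ι] [DecidableEq ι]
    {P W : Matrix ι ι ℝ} {S : ℕ → Matrix ι ι ℝ} (hP : P.PosSemidef) (hW : W.PosDef)
    (hS : ∀ k, (S k).PosSemidef)
    (hstep : ∀ k, (P * S (k + 1)).trace = (P * S k).trace - (W * S k).trace) :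
    HasSum (fun k => (W * S k).trace) (P * S 0).trace := by
  have hW_eq : ∀ k, (W * S k).trace = (P * S k).trace - (P * S (k + 1)).trace := fun k => by
    rw [hstep]; ring
  obtain ⟨c, hc, hWc⟩ := hW.exists_pos_sub_smul_posSemidef hP.isHermitian
  simp only [hW_eq]
  refine hasSum_sub_succ_of_le_sub_succ hc (fun k => hP.trace_mul_nonneg (hS k)) fun k => ?_
  have h := hWc.trace_mul_nonneg (hS k)
  rwa [Matrix.sub_mul, trace_sub, Matrix.smul_mul, trace_smul, smul_eq_mul, sub_nonneg,
    hW_eq] at h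

lemma riccati_completing_square {ι κ : Type*} [Fintype ι] [Fintype κ] [DecidableEq κ]
    {R G : Matrix κ κ ℝ} {H K : Matrix κ ι ℝ} (hRG : IsUnit (R + G))
    (hRG_symm : (R + G)ᵀ = R + G) (hK : K = -((R + G)⁻¹ * H)) :
    Kᵀ * R * K + (Kᵀ * H + Hᵀ * K + Kᵀ * G * K) = -(Hᵀ * (R + G)⁻¹ * H) := by
  have hKT : Kᵀ = -(Hᵀ * (R + G)⁻¹) := by
    rw [hK, transpose_neg, transpose_mul, transpose_nonsing_inv, hRG_symm]
  have hquad : Kᵀ * R * K + Kᵀ * G * K = Hᵀ * (R + G)⁻¹ * H := by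
    rw [Matrix.mul_assoc, Matrix.mul_assoc, ← Matrix.mul_add, ← Matrix.add_mul, hKT, hK]
    simp only [Matrix.mul_neg, Matrix.neg_mul, neg_neg]
    rw [← Matrix.mul_assoc (R + G), mul_nonsing_inv _ ((isUnit_iff_isUnit_det _).1 hRG),
      Matrix.one_mul, Matrix.mul_assoc]
  have hcross : Kᵀ * H = -(Hᵀ * (R + G)⁻¹ * H) := by rw [hKT, Matrix.neg_mul]
  have hcross' : Hᵀ * K = -(Hᵀ * (R + G)⁻¹ * H) := by rw [hK, Matrix.mul_neg, Matrix.mul_assoc]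
  calc Kᵀ * R * K + (Kᵀ * H + Hᵀ * K + Kᵀ * G * K)
      = (Kᵀ * R * K + Kᵀ * G * K) + Kᵀ * H + Hᵀ * K := by abel
    _ = -(Hᵀ * (R + G)⁻¹ * H) := by rw [hquad, hcross, hcross']; abel

section Model

variable {n d m : ℕ}

lemma Amat_eq_sum_vecCons (C : Fin (n + 1) → Matrix (Fin d) (Fin d) ℝ) (w : Fin n → ℝ) :
    Amat C w = ∑ p, vecCons 1 w p • C p := by
  simp [Amat, Fin.sum_univ_succ]

lemma transpose_Amat (C : Fin (n + 1) → Matrix (Fin d) (Fin d) ℝ) (w : Fin n → ℝ) :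
    (Amat C w)ᵀ = ∑ p, vecCons 1 w p • (C p)ᵀ := by
  simp [Amat_eq_sum_vecCons, transpose_sum]

lemma Amat_add_Bmat_mul (A : Fin (n + 1) → Matrix (Fin d) (Fin d) ℝ)
    (B : Fin (n + 1) → Matrix (Fin d) (Fin m) ℝ) (K : Matrix (Fin m) (Fin d) ℝ) (w : Fin n → ℝ) :
    Amat A w + Bmat B w * K = Amat (fun p => A p + B p * K) w := by
  simp only [Amat, Bmat, Matrix.add_mul, Matrix.sum_mul, Matrix.smul_mul, smul_add,
    Finset.sum_add_distrib]
  abel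

lemma Abar_add_Bbar_mul (A : Fin (n + 1) → Matrix (Fin d) (Fin d) ℝ)
    (B : Fin (n + 1) → Matrix (Fin d) (Fin m) ℝ) (K : Matrix (Fin m) (Fin d) ℝ) :
    Abar A + Bbar B * K = Abar (fun p => A p + B p * K) := by
  ext ⟨p, a⟩ i
  simp [Abar, Bbar, mul_apply]

lemma Fm_eq_sum (C : Fin (n + 1) → Matrix (Fin d) (Fin d) ℝ)
    (St : Matrix (Fin (n + 1)) (Fin (n + 1)) ℝ) (P : Matrix (Fin d) (Fin d) ℝ) :
    Fm C St P = ∑ p, ∑ q, St p q • ((C p)ᵀ * P * C q) := by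
  ext i j
  simp only [Fm, Abar, mul_apply, Matrix.sum_apply, Matrix.smul_apply, transpose_apply,
    kroneckerMap_apply, of_apply, smul_eq_mul, Fintype.sum_prod_type, Finset.mul_sum,
    Finset.sum_mul]
  conv_lhs => enter [2, q]; rw [Finset.sum_comm]
  rw [Finset.sum_comm]
  exact Finset.sum_congr rfl fun p _ => Finset.sum_congr rfl fun q _ =>
    Finset.sum_congr rfl fun b _ => Finset.sum_congr rfl fun a _ => by ring

lemma Fm_add_mul (A : Fin (n + 1) → Matrix (Fin d) (Fin d) ℝ)
    (B : Fin (n + 1) → Matrix (Fin d) (Fin m) ℝ) (K : Matrix (Fin m) (Fin d) ℝ)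
    {St : Matrix (Fin (n + 1)) (Fin (n + 1)) ℝ} {P : Matrix (Fin d) (Fin d) ℝ}
    (hX : (St ⊗ₖ P)ᵀ = St ⊗ₖ P) :
    Fm (fun p => A p + B p * K) St P =
      Fm A St P + Kᵀ * Hm A B St P + (Hm A B St P)ᵀ * K + Kᵀ * Gm B St P * K := by
  simp only [Fm, Gm, Hm, ← Abar_add_Bbar_mul, transpose_add, transpose_mul, hX,
    transpose_transpose, Matrix.add_mul, Matrix.mul_add, Matrix.mul_assoc]
  abel

end Model

section SecondMoments

variable {n d : ℕ} {ν : Measure (Fin n → ℝ)} {μ : Fin n → ℝ} {Sg : Matrix (Fin n) (Fin n) ℝ}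
  (hint1 : ∀ i, Integrable (fun w : Fin n → ℝ => w i) ν)
  (hint2 : ∀ i j, Integrable (fun w : Fin n → ℝ => w i * w j) ν)
  (hμ : ∀ i, μ i = ∫ w, w i ∂ν) (hSg : ∀ i j, Sg i j = ∫ w, (w i - μ i) * (w j - μ j) ∂ν)

include hint1 hint2

open ProbabilityTheory in
include hμ hSg in
lemma integral_mul_eq_add_mul [IsProbabilityMeasure ν] (i j : Fin n) :
    ∫ w, w i * w j ∂ν = Sg i j + μ i * μ j := by
  have hL2 : ∀ i, MemLp (fun w : Fin n → ℝ => w i) 2 ν := fun i =>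
    (memLp_two_iff_integrable_sq (hint1 i).aestronglyMeasurable).2 (by simpa [sq] using hint2 i i)
  have hcov := covariance_eq_sub (hL2 i) (hL2 j)
  simp only [covariance, ← hμ, ← hSg, Pi.mul_apply] at hcov
  linarith

lemma integrable_vecCons_mul_vecCons [IsFiniteMeasure ν] (p q : Fin (n + 1)) :
    Integrable (fun w => vecCons 1 w p * vecCons 1 w q) ν := by
  cases p using Fin.cases <;> cases q using Fin.cases <;> simp [hint1, hint2]

include hμ hSg in
lemma integral_vecCons_mul_vecCons [IsProbabilityMeasure ν] (p q : Fin (n + 1)) :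
    ∫ w, vecCons 1 w p * vecCons 1 w q ∂ν = tildeSigma μ Sg p q := by
  cases p using Fin.cases <;> cases q using Fin.cases <;>
    simp [tildeSigma, hμ, integral_mul_eq_add_mul hint1 hint2 hμ hSg]

include hμ hSg in
lemma tildeSigma_posSemidef_s13 [IsProbabilityMeasure ν] : (tildeSigma μ Sg).PosSemidef := by
  have hmoment : tildeSigma μ Sg =
      entrywiseIntegral ν fun w => vecMulVec (vecCons 1 w) (vecCons 1 w) := by
    ext p q
    exact (integral_vecCons_mul_vecCons hint1 hint2 hμ hSg p q).symm
  rw [hmoment]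
  exact posSemidef_entrywiseIntegral (integrable_vecCons_mul_vecCons hint1 hint2)
    fun w => by simpa using posSemidef_vecMulVec_self_star (vecCons 1 w)

lemma integrable_Amat_mul_mul_transpose_apply [IsFiniteMeasure ν]
    (C : Fin (n + 1) → Matrix (Fin d) (Fin d) ℝ) (X : Matrix (Fin d) (Fin d) ℝ) (i j : Fin d) :
    Integrable (fun w => (Amat C w * X * (Amat C w)ᵀ) i j) ν := by
  simp_rw [transpose_Amat, Amat_eq_sum_vecCons]
  exact integrable_sum_smul_mul_mul_sum_smul_apply
    (integrable_vecCons_mul_vecCons hint1 hint2) _ _ _ i j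

lemma integrable_transpose_Amat_mul_mul_apply [IsFiniteMeasure ν]
    (C : Fin (n + 1) → Matrix (Fin d) (Fin d) ℝ) (P : Matrix (Fin d) (Fin d) ℝ) (i j : Fin d) :
    Integrable (fun w => ((Amat C w)ᵀ * P * Amat C w) i j) ν := by
  simp_rw [transpose_Amat, Amat_eq_sum_vecCons]
  exact integrable_sum_smul_mul_mul_sum_smul_apply
    (integrable_vecCons_mul_vecCons hint1 hint2) _ _ _ i j

include hμ hSg in
lemma entrywiseIntegral_transpose_Amat_mul_mul [IsProbabilityMeasure ν]
    (C : Fin (n + 1) → Matrix (Fin d) (Fin d) ℝ) (P : Matrix (Fin d) (Fin d) ℝ) :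
    entrywiseIntegral ν (fun w => (Amat C w)ᵀ * P * Amat C w) = Fm C (tildeSigma μ Sg) P := by
  simp_rw [transpose_Amat, Amat_eq_sum_vecCons]
  rw [entrywiseIntegral_sum_smul_mul_mul_sum_smul (integrable_vecCons_mul_vecCons hint1 hint2),
    Fm_eq_sum]
  simp only [integral_vecCons_mul_vecCons hint1 hint2 hμ hSg]

end SecondMoments

section SecondMomentRecursion

variable {n d : ℕ} {ν : Measure (Fin n → ℝ)} {M : (Fin n → ℝ) → Matrix (Fin d) (Fin d) ℝ}
  (hM : ∀ (X : Matrix (Fin d) (Fin d) ℝ) (i j : Fin d),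
    Integrable (fun w => (M w * X * (M w)ᵀ) i j) ν)

lemma Sseq_succ (x₀ : Fin d → ℝ) (k : ℕ) :
    Sseq ν M x₀ (k + 1) = entrywiseIntegral ν fun w => M w * Sseq ν M x₀ k * (M w)ᵀ := rfl

include hM in
lemma Sseq_posSemidef (x₀ : Fin d → ℝ) (k : ℕ) : (Sseq ν M x₀ k).PosSemidef := by
  induction k with
  | zero => simpa [Sseq] using posSemidef_vecMulVec_self_star x₀
  | succ k ih =>
    exact posSemidef_entrywiseIntegral (hM _) fun w => ih.mul_mul_transpose_same (M w)

include hM in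
lemma trace_mul_Sseq_succ {P : Matrix (Fin d) (Fin d) ℝ}
    (hMP : ∀ i j : Fin d, Integrable (fun w => ((M w)ᵀ * P * M w) i j) ν)
    (x₀ : Fin d → ℝ) (k : ℕ) :
    (P * Sseq ν M x₀ (k + 1)).trace =
      (entrywiseIntegral ν (fun w => (M w)ᵀ * P * M w) * Sseq ν M x₀ k).trace := by
  rw [Sseq_succ, trace_mul_entrywiseIntegral (hM _), trace_mul_comm,
    trace_mul_entrywiseIntegral hMP]
  congr 1; ext w
  simp only [← Matrix.mul_assoc]
  rw [trace_mul_comm, ← Matrix.mul_assoc, ← Matrix.mul_assoc, trace_mul_comm,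
    ← Matrix.mul_assoc, ← Matrix.mul_assoc]

end SecondMomentRecursion

/-- If `P ≻ 0` solves the Riccati equation and `K = −(R + G(P))⁻¹H(P)`, then
for every `x₀` the infinite-horizon closed-loop cost is finite and equals `x₀ᵀPx₀`:
`Σ_k tr((Q + KᵀRK) S_k(x₀)) = x₀ᵀPx₀`. -/
theorem stmt13 {n d m : ℕ}
    (A : Fin (n + 1) → Matrix (Fin d) (Fin d) ℝ)
    (B : Fin (n + 1) → Matrix (Fin d) (Fin m) ℝ)
    (ν : Measure (Fin n → ℝ)) [IsProbabilityMeasure ν]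
    (hint1 : ∀ i, Integrable (fun w : Fin n → ℝ => w i) ν)
    (hint2 : ∀ i j, Integrable (fun w : Fin n → ℝ => w i * w j) ν)
    (μ : Fin n → ℝ) (hμ : ∀ i, μ i = ∫ w, w i ∂ν)
    (Sg : Matrix (Fin n) (Fin n) ℝ)
    (hSg : ∀ i j, Sg i j = ∫ w, (w i - μ i) * (w j - μ j) ∂ν)
    (Q : Matrix (Fin d) (Fin d) ℝ) (hQ : Q.PosDef)
    (R : Matrix (Fin m) (Fin m) ℝ) (hR : R.PosDef)
    (P : Matrix (Fin d) (Fin d) ℝ) (hP : P.PosDef)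
    (hRic : P = Q + Fm A (tildeSigma μ Sg) P -
      (Hm A B (tildeSigma μ Sg) P)ᵀ * (R + Gm B (tildeSigma μ Sg) P)⁻¹ *
        Hm A B (tildeSigma μ Sg) P)
    (K : Matrix (Fin m) (Fin d) ℝ)
    (hK : K = -((R + Gm B (tildeSigma μ Sg) P)⁻¹ * Hm A B (tildeSigma μ Sg) P))
    (x₀ : Fin d → ℝ) :
    HasSum
      (fun k => ((Q + Kᵀ * R * K) *
        Sseq ν (fun w => Amat A w + Bmat B w * K) x₀ k).trace)
      (x₀ ⬝ᵥ P *ᵥ x₀) := by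
  set St := tildeSigma μ Sg
  set C : Fin (n + 1) → Matrix (Fin d) (Fin d) ℝ := fun p => A p + B p * K
  have hX : (St ⊗ₖ P).PosSemidef :=
    (tildeSigma_posSemidef_s13 hint1 hint2 hμ hSg).kronecker hP.posSemidef
  have hRG : (R + Gm B St P).PosDef := hR.add_posSemidef (hX.transpose_mul_mul_same_s13 (Bbar B))
  have hcost : (Q + Kᵀ * R * K).PosDef :=
    hQ.add_posSemidef (hR.posSemidef.transpose_mul_mul_same_s13 K)
  have hlyap : entrywiseIntegral ν (fun w => (Amat C w)ᵀ * P * Amat C w) =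
      P - (Q + Kᵀ * R * K) := by
    rw [entrywiseIntegral_transpose_Amat_mul_mul hint1 hint2 hμ hSg, eq_sub_iff_add_eq,
      Fm_add_mul A B K (isHermitian_iff_isSymm.1 hX.isHermitian).eq]
    conv_rhs => rw [hRic, sub_eq_add_neg]
    rw [← riccati_completing_square hRG.isUnit
      (isHermitian_iff_isSymm.1 hRG.isHermitian).eq hK]
    abel
  simp_rw [Amat_add_Bmat_mul]
  have hS := Sseq_posSemidef (integrable_Amat_mul_mul_transpose_apply hint1 hint2 C) x₀
  have hstep (k : ℕ) : (P * Sseq ν (Amat C) x₀ (k + 1)).trace =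
      (P * Sseq ν (Amat C) x₀ k).trace - ((Q + Kᵀ * R * K) * Sseq ν (Amat C) x₀ k).trace := by
    rw [trace_mul_Sseq_succ (integrable_Amat_mul_mul_transpose_apply hint1 hint2 C)
      (integrable_transpose_Amat_mul_mul_apply hint1 hint2 C P), hlyap, Matrix.sub_mul, trace_sub]
  simpa [Sseq, mul_vecMulVec, dotProduct_comm] using
    hasSum_trace_mul_of_trace_mul_succ hP.posSemidef hcost hS hstep

end
end
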